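/- Let d > 2 and let a_0, ..., a_{r-1} be nonnegative integers with ∑ a_m ≤ d, such that ∑_m a_m e^{2πim/r} is a nonzero real number, where 2 < r ≤ d and r is of the form 2d/n for a divisor n ≥ 2 of d. Then for any prime p > d^{φ(d)/2} not dividing r and any primitive r-th root of unity ζ over F_p, one has ∑_m a_m ζ^m ≠ 0 in the algebraic closure of F_p. -/

import Mathlib

/-!
Put `f = ∑ a_m X^m ∈ ℤ[X]`. A polynomial over `ℤ` vanishing at one primitive `r`-th root of unity
in characteristic zero is divisible by `Φ_r`, so it vanishes at the primitive `r`-th roots of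
unity of every domain. Applied to `f(X^{r-1}) - f(X)`, the reality of `f(e^{2πi/r})` gives
`f(ξ⁻¹) = f(ξ)` at all of them. Hence, in `ℚ(η)`, the product `N` of the `f(η^t)` over
`t ∈ (ℤ/r)ˣ/{±1}` (the norm of `f(η)` from the maximal real subfield) is Galois invariant and
integral, i.e. an integer. Applied to `P - N`, where `P(X) = ∏ f(X^t)`, the same principle gives
`P(e^{2πi/r}) = N`, so `N ≠ 0` and `|N| ≤ (∑ a_m)^{φ(r)/2}`, and `P(ζ) = N` in characteristic
`p`, where the factor `f(ζ)` vanishes, so `p ∣ N`. Thus `p ≤ d^{φ(r)/2} ≤ d^{φ(d)/2}`.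
-/

open Polynomial
open scoped Nat

theorem Nat.totient_two_mul_le (e : ℕ) : φ (2 * e) ≤ 2 * φ e := by
  rcases Nat.even_or_odd e with he | he
  · rw [Nat.totient_mul_of_prime_of_dvd Nat.prime_two he.two_dvd]
  · rw [Nat.totient_mul (Nat.coprime_two_left.2 he), Nat.totient_two]
    omega

theorem Nat.totient_two_mul_le_totient_mul {k : ℕ} (hk : 2 ≤ k) (e : ℕ) :
    φ (2 * e) ≤ φ (k * e) := by
  obtain rfl | hk := hk.eq_or_lt
  · rfl
  have : 2 ≤ φ k := by
    obtain ⟨j, hj⟩ := Nat.totient_even hk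
    have := Nat.totient_pos.2 (by omega : 0 < k)
    omega
  calc φ (2 * e) ≤ 2 * φ e := Nat.totient_two_mul_le e
    _ ≤ φ k * φ e := Nat.mul_le_mul_right _ this
    _ ≤ φ (k * e) := Nat.totient_super_multiplicative k e

theorem Nat.totient_two_mul_div_le {d n : ℕ} (hn : 2 ≤ n) (hnd : n ∣ d) :
    φ (2 * d / n) ≤ φ d := by
  obtain ⟨e, rfl⟩ := hnd
  rw [Nat.mul_div_assoc _ (dvd_mul_right n e), Nat.mul_div_cancel_left e (by omega)]
  exact Nat.totient_two_mul_le_totient_mul hn e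

theorem map_aeval_int {A B F : Type*} [Ring A] [Ring B] [FunLike F A B] [RingHomClass F A B]
    (g : F) (x : A) (f : ℤ[X]) : g (aeval x f) = aeval (g x) f :=
  (aeval_algHom_apply (g : A →+* B).toIntAlgHom x f).symm

namespace IsPrimitiveRoot

variable {r : ℕ}

theorem pow_zmod_val_mul {M : Type*} [CommMonoid M] {ξ : M} (hξ : IsPrimitiveRoot ξ r)
    (a b : ZMod r) : ξ ^ (a * b).val = (ξ ^ a.val) ^ b.val := by
  rw [ZMod.val_mul, ← pow_eq_pow_mod _ hξ.pow_eq_one, pow_mul]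

theorem pow_zmod_val_neg [NeZero r] {M : Type*} [DivisionCommMonoid M] {ξ : M}
    (hξ : IsPrimitiveRoot ξ r) (a : ZMod r) : ξ ^ (-a).val = (ξ ^ a.val)⁻¹ := by
  refine eq_inv_of_mul_eq_one_left ?_
  rw [← pow_add, pow_eq_pow_mod _ hξ.pow_eq_one, ← ZMod.val_add,
    neg_add_cancel, ZMod.val_zero, pow_zero]

theorem aeval_eq_zero_of_isPrimitiveRoot [NeZero r] {K R : Type*} [Field K] [CharZero K]
    [CommRing R] [IsDomain R] {ξ : K} {ζ : R} (hξ : IsPrimitiveRoot ξ r)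
    (hζ : IsPrimitiveRoot ζ r) {g : ℤ[X]} (hg : aeval ξ g = 0) : aeval ζ g = 0 := by
  have hr := Nat.pos_of_neZero r
  have hdvd : cyclotomic r ℤ ∣ g := by
    rw [cyclotomic_eq_minpoly hξ hr]
    exact minpoly.isIntegrallyClosed_dvd (hξ.isIntegral hr) hg
  have := hζ.neZero'
  obtain ⟨h, rfl⟩ := hdvd
  rw [map_mul, aeval_def, eval₂_eq_eval_map, map_cyclotomic,
    (isRoot_cyclotomic_iff.2 hζ).eq_zero, zero_mul]

theorem aeval_eq_intCast_of_isPrimitiveRoot [NeZero r] {K R : Type*}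
    [Field K] [CharZero K] [CommRing R] [IsDomain R] {ξ : K} {ζ : R} (hξ : IsPrimitiveRoot ξ r)
    (hζ : IsPrimitiveRoot ζ r) {g : ℤ[X]} {z : ℤ} (hg : aeval ξ g = z) : aeval ζ g = z := by
  have := hξ.aeval_eq_zero_of_isPrimitiveRoot hζ (g := g - C z)
    (by rw [map_sub, aeval_C, hg, eq_intCast, sub_self])
  rwa [map_sub, aeval_C, eq_intCast, sub_eq_zero] at this

theorem pow_pred_eq_inv [NeZero r] {M : Type*} [DivisionCommMonoid M] {ξ : M}
    (hξ : IsPrimitiveRoot ξ r) : ξ ^ (r - 1) = ξ⁻¹ :=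
  eq_inv_of_mul_eq_one_left <| by rw [pow_sub_one_mul (NeZero.ne r), hξ.pow_eq_one]

theorem aeval_inv_eq_of_isPrimitiveRoot [NeZero r] {K L : Type*} [Field K] [CharZero K]
    [Field L] {ξ : K} {ζ : L} (hξ : IsPrimitiveRoot ξ r) (hζ : IsPrimitiveRoot ζ r)
    {f : ℤ[X]} (hf : aeval ξ⁻¹ f = aeval ξ f) : aeval ζ⁻¹ f = aeval ζ f := by
  have hg := aeval_eq_zero_of_isPrimitiveRoot (g := f.comp (X ^ (r - 1)) - f) hξ hζ
    (by rw [map_sub, aeval_comp, map_pow, aeval_X, hξ.pow_pred_eq_inv, hf, sub_self])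
  rwa [map_sub, aeval_comp, map_pow, aeval_X, hζ.pow_pred_eq_inv, sub_eq_zero] at hg

end IsPrimitiveRoot

abbrev UnitsModSign (r : ℕ) := (ZMod r)ˣ ⧸ Subgroup.zpowers (-1 : (ZMod r)ˣ)

namespace UnitsModSign

variable {r : ℕ} [NeZero r]

noncomputable instance : Fintype (UnitsModSign r) := Fintype.ofFinite _

theorem card (hr : 2 < r) : Fintype.card (UnitsModSign r) = φ r / 2 := by
  have : Fact (1 < r) := ⟨by omega⟩
  have hsign : orderOf (-1 : (ZMod r)ˣ) = 2 := by
    rw [← orderOf_units, Units.val_neg, Units.val_one, orderOf_neg_one, ZMod.ringChar_zmod_n,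
      if_neg hr.ne']
  have := Subgroup.card_eq_card_quotient_mul_card_subgroup (Subgroup.zpowers (-1 : (ZMod r)ˣ))
  rw [Nat.card_zpowers, hsign, Nat.card_eq_fintype_card, ZMod.card_units_eq_totient] at this
  rw [← Nat.card_eq_fintype_card, this, Nat.mul_div_cancel _ two_pos]

end UnitsModSign

/-- The representatives `c.out` are arbitrary: at a primitive root `ξ` with `f(ξ⁻¹) = f(ξ)` the
value does not depend on them (`aeval_pow_val_out_mk`). -/
noncomputable def halfNormPoly (r : ℕ) [NeZero r] (f : ℤ[X]) : ℤ[X] :=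
  ∏ c : UnitsModSign r, f.comp (X ^ (c.out : ZMod r).val)

section halfNormPoly

variable {r : ℕ} [NeZero r] {f : ℤ[X]}

theorem aeval_halfNormPoly {A : Type*} [CommRing A] (x : A) :
    aeval x (halfNormPoly r f) = ∏ c : UnitsModSign r, aeval (x ^ (c.out : ZMod r).val) f := by
  simp only [halfNormPoly, map_prod, aeval_comp, map_pow, aeval_X]

theorem aeval_pow_val_out_mk {L : Type*} [Field L] {ξ : L} (hξ : IsPrimitiveRoot ξ r)
    (hf : ∀ ζ : L, IsPrimitiveRoot ζ r → aeval ζ⁻¹ f = aeval ζ f) (t : (ZMod r)ˣ) :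
    aeval (ξ ^ ((t : UnitsModSign r).out : ZMod r).val) f = aeval (ξ ^ (t : ZMod r).val) f := by
  obtain ⟨⟨s, hs⟩, hout⟩ := QuotientGroup.mk_out_eq_mul (Subgroup.zpowers (-1)) t
  obtain ⟨k, rfl⟩ := Subgroup.mem_zpowers_iff.1 hs
  rw [hout, Subgroup.coe_mk, neg_one_zpow_eq_ite]
  split_ifs
  · rw [mul_one]
  · rw [mul_neg_one, Units.val_neg, hξ.pow_zmod_val_neg,
      hf _ (hξ.pow_of_coprime _ (ZMod.val_coe_unit_coprime t))]

theorem aeval_halfNormPoly_eq_zero {L : Type*} [Field L] {ξ : L} (hξ : IsPrimitiveRoot ξ r)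
    (hf : ∀ ζ : L, IsPrimitiveRoot ζ r → aeval ζ⁻¹ f = aeval ζ f) (h0 : aeval ξ f = 0) :
    aeval ξ (halfNormPoly r f) = 0 := by
  rw [aeval_halfNormPoly]
  refine Finset.prod_eq_zero (Finset.mem_univ ((1 : (ZMod r)ˣ) : UnitsModSign r)) ?_
  rw [aeval_pow_val_out_mk hξ hf, Units.val_one, ZMod.val_one_eq_one_mod,
    ← pow_eq_pow_mod _ hξ.pow_eq_one, pow_one, h0]

theorem aeval_halfNormPoly_ne_zero {K : Type*} [Field K] [CharZero K] {ξ : K}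
    (hξ : IsPrimitiveRoot ξ r) (h : aeval ξ f ≠ 0) : aeval ξ (halfNormPoly r f) ≠ 0 := by
  rw [aeval_halfNormPoly, Finset.prod_ne_zero_iff]
  exact fun c _ h0 => h <| IsPrimitiveRoot.aeval_eq_zero_of_isPrimitiveRoot
    (hξ.pow_of_coprime _ (ZMod.val_coe_unit_coprime c.out)) hξ h0

theorem norm_aeval_halfNormPoly_le {K : Type*} [NormedField K] {ξ : K}
    (hξ : IsPrimitiveRoot ξ r) {B : ℝ} (hB : ∀ ζ : K, IsPrimitiveRoot ζ r → ‖aeval ζ f‖ ≤ B) :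
    ‖aeval ξ (halfNormPoly r f)‖ ≤ B ^ Fintype.card (UnitsModSign r) := by
  rw [aeval_halfNormPoly, norm_prod, ← Finset.card_univ, ← Finset.prod_const]
  exact Finset.prod_le_prod (fun _ _ => norm_nonneg _)
    fun c _ => hB _ (hξ.pow_of_coprime _ (ZMod.val_coe_unit_coprime c.out))

theorem exists_aeval_halfNormPoly_eq_intCast {K : Type*} [Field K] [CharZero K]
    [IsCyclotomicExtension {r} ℚ K] {η : K} (hη : IsPrimitiveRoot η r)
    (hf : ∀ ζ : K, IsPrimitiveRoot ζ r → aeval ζ⁻¹ f = aeval ζ f) :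
    ∃ z : ℤ, aeval η (halfNormPoly r f) = z := by
  have : FiniteDimensional ℚ K := IsCyclotomicExtension.finiteDimensional {r} ℚ K
  have : IsGalois ℚ K := IsCyclotomicExtension.isGalois {r} ℚ K
  have hfixed (σ : K ≃ₐ[ℚ] K) : σ (aeval η (halfNormPoly r f)) = aeval η (halfNormPoly r f) := by
    set u : UnitsModSign r := QuotientGroup.mk (hη.autToPow ℚ σ)
    calc σ (aeval η (halfNormPoly r f))
        = ∏ c : UnitsModSign r, aeval (η ^ ((u * c).out : ZMod r).val) f := by
          rw [map_aeval_int, aeval_halfNormPoly, ← hη.autToPow_spec ℚ]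
          refine Finset.prod_congr rfl fun c _ => ?_
          rw [← QuotientGroup.out_eq' c, ← QuotientGroup.mk_mul, aeval_pow_val_out_mk hη hf,
            Units.val_mul, hη.pow_zmod_val_mul, QuotientGroup.out_eq']
      _ = aeval η (halfNormPoly r f) := by
          rw [aeval_halfNormPoly]
          exact Equiv.prod_comp (Equiv.mulLeft u) fun c => aeval (η ^ (c.out : ZMod r).val) f
  obtain ⟨q, hq⟩ := (IsGalois.mem_range_algebraMap_iff_fixed _).2 hfixed
  have hint : IsIntegral ℤ (aeval η (halfNormPoly r f)) :=
    adjoin_le_integralClosure (hη.isIntegral (Nat.pos_of_neZero r))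
      (aeval_mem_adjoin_singleton ℤ η)
  rw [← hq, isIntegral_algebraMap_iff (algebraMap ℚ K).injective,
    IsIntegrallyClosed.isIntegral_iff] at hint
  obtain ⟨z, rfl⟩ := hint
  exact ⟨z, by rw [← hq, eq_intCast, map_intCast]⟩

end halfNormPoly

theorem natCast_le_pow_totient_div_two_of_aeval_eq_zero {r : ℕ} (hr : 2 < r) {f : ℤ[X]}
    {ω : ℂ} (hω : IsPrimitiveRoot ω r) (hsymm : aeval ω⁻¹ f = aeval ω f) (hfω : aeval ω f ≠ 0)
    {B : ℝ} (hB : ∀ ξ : ℂ, IsPrimitiveRoot ξ r → ‖aeval ξ f‖ ≤ B)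
    {p : ℕ} {k : Type*} [Field k] [CharP k p] {ζ : k} (hζ : IsPrimitiveRoot ζ r)
    (hζf : aeval ζ f = 0) : (p : ℝ) ≤ B ^ (φ r / 2) := by
  have : NeZero r := ⟨by omega⟩
  have : IsCyclotomicExtension {r} ℚ (CyclotomicField r ℚ) :=
    CyclotomicField.isCyclotomicExtension r ℚ
  have hη := IsCyclotomicExtension.zeta_spec r ℚ (CyclotomicField r ℚ)
  obtain ⟨z, hz⟩ := exists_aeval_halfNormPoly_eq_intCast hη
    fun ξ hξ => hω.aeval_inv_eq_of_isPrimitiveRoot hξ hsymm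
  have hzp : (p : ℤ) ∣ z := by
    rw [← CharP.intCast_eq_zero_iff k, ← hη.aeval_eq_intCast_of_isPrimitiveRoot hζ hz]
    exact aeval_halfNormPoly_eq_zero hζ
      (fun ξ hξ => hω.aeval_inv_eq_of_isPrimitiveRoot hξ hsymm) hζf
  have hzω := hη.aeval_eq_intCast_of_isPrimitiveRoot hω hz
  have hz0 : z ≠ 0 := by
    rintro rfl
    exact aeval_halfNormPoly_ne_zero hω hfω (by rw [hzω, Int.cast_zero])
  calc (p : ℝ) ≤ |(z : ℝ)| := by
        exact_mod_cast Int.le_of_dvd (abs_pos.2 hz0) ((dvd_abs _ _).2 hzp)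
    _ = ‖aeval ω (halfNormPoly r f)‖ := by rw [hzω, Complex.norm_intCast]
    _ ≤ B ^ (φ r / 2) := UnitsModSign.card hr ▸ norm_aeval_halfNormPoly_le hω hB

theorem aeval_inv_eq_of_im_eq_zero {ω : ℂ} (hω : ‖ω‖ = 1) {f : ℤ[X]} (h : (aeval ω f).im = 0) :
    aeval ω⁻¹ f = aeval ω f := by
  rw [Complex.inv_eq_conj hω, ← map_aeval_int, Complex.conj_eq_iff_im.2 h]

theorem norm_sum_natCast_mul_pow_le {ι : Type*} (s : Finset ι) (a : ι → ℕ) (e : ι → ℕ) {ξ : ℂ}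
    (hξ : ‖ξ‖ = 1) : ‖∑ i ∈ s, (a i : ℂ) * ξ ^ e i‖ ≤ ∑ i ∈ s, a i := by
  push_cast
  refine (norm_sum_le _ _).trans_eq (Finset.sum_congr rfl fun i _ => ?_)
  rw [norm_mul, norm_pow, hξ, one_pow, mul_one, Complex.norm_natCast]

open Complex

theorem statement17_general (d n r : ℕ) (hd : 2 < d) (hn : 2 ≤ n) (hnd : n ∣ d)
    (hrdef : r = 2 * d / n) (hr2 : 2 < r)
    (a : Fin r → ℕ) (ha : ∑ m, a m ≤ d)
    (hreal : (∑ m : Fin r, (a m : ℂ) *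
        Complex.exp (2 * Real.pi * Complex.I * (m : ℕ) / r)).im = 0)
    (hne : (∑ m : Fin r, (a m : ℂ) *
        Complex.exp (2 * Real.pi * Complex.I * (m : ℕ) / r)) ≠ 0)
    (p : ℕ) [Fact p.Prime] (hp : (d : ℝ) ^ ((Nat.totient d : ℝ) / 2) < (p : ℝ))
    (ζ : AlgebraicClosure (ZMod p)) (hζ : IsPrimitiveRoot ζ r) :
    (∑ m : Fin r, (a m : AlgebraicClosure (ZMod p)) * ζ ^ (m : ℕ)) ≠ 0 := by
  intro hzero
  have hω := isPrimitiveRoot_exp r (by omega)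
  set f : ℤ[X] := ∑ m : Fin r, C (a m : ℤ) * X ^ (m : ℕ)
  have hfω : aeval (exp (2 * Real.pi * I / r)) f =
      ∑ m : Fin r, (a m : ℂ) * exp (2 * Real.pi * I * (m : ℕ) / r) := by
    simp only [f, map_sum, map_mul, aeval_C, map_pow, aeval_X, ← exp_nat_mul]
    congr! 3
    ring
  have hpB := natCast_le_pow_totient_div_two_of_aeval_eq_zero hr2 hω
    (aeval_inv_eq_of_im_eq_zero (hω.norm'_eq_one (by omega)) (hfω ▸ hreal)) (hfω ▸ hne)
    (fun ξ hξ => by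
      simpa [f] using norm_sum_natCast_mul_pow_le _ a _ (hξ.norm'_eq_one (by omega)))
    hζ (by simpa [f] using hzero)
  have hφ : φ r / 2 ≤ φ d / 2 := Nat.div_le_div_right (hrdef ▸ Nat.totient_two_mul_div_le hn hnd)
  have hd2 : (φ d : ℝ) / 2 = (φ d / 2 : ℕ) := by
    rw [Nat.cast_div (Nat.totient_even hd).two_dvd two_ne_zero, Nat.cast_two]
  refine hp.not_ge (hpB.trans ?_)
  rw [hd2, Real.rpow_natCast]
  calc (∑ m, (a m : ℝ)) ^ (φ r / 2) ≤ (d : ℝ) ^ (φ r / 2) := by gcongr; exact_mod_cast ha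
    _ ≤ (d : ℝ) ^ (φ d / 2) := pow_le_pow_right₀ (by exact_mod_cast (by omega : 1 ≤ d)) hφ

/-- Let `d > 2`, `2 < r ≤ d` with `r = 2d/n` for a divisor `n ≥ 2` of `d`, and let
`a_0, …, a_{r-1}` be nonnegative integers with `∑ a_m ≤ d` such that
`∑_m a_m e^{2πim/r}` is a nonzero real number.  Then for any prime `p > d^{φ(d)/2}` not
dividing `r` and any primitive `r`-th root of unity `ζ` over `F_p`,
`∑_m a_m ζ^m ≠ 0` in the algebraic closure of `F_p`. -/
theorem statement17 (d n r : ℕ) (hd : 2 < d) (hn : 2 ≤ n) (hnd : n ∣ d)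
    (hrdef : r = 2 * d / n) (hr2 : 2 < r) (hrd : r ≤ d)
    (a : Fin r → ℕ) (ha : ∑ m, a m ≤ d)
    (hreal : (∑ m : Fin r, (a m : ℂ) *
        Complex.exp (2 * Real.pi * Complex.I * (m : ℕ) / r)).im = 0)
    (hne : (∑ m : Fin r, (a m : ℂ) *
        Complex.exp (2 * Real.pi * Complex.I * (m : ℕ) / r)) ≠ 0)
    (p : ℕ) [Fact p.Prime] (hp : (d : ℝ) ^ ((Nat.totient d : ℝ) / 2) < (p : ℝ))
    (hpr : ¬ p ∣ r)
    (ζ : AlgebraicClosure (ZMod p)) (hζ : IsPrimitiveRoot ζ r) :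
    (∑ m : Fin r, (a m : AlgebraicClosure (ZMod p)) * ζ ^ (m : ℕ)) ≠ 0 :=
  statement17_general d n r hd hn hnd hrdef hr2 a ha hreal hne p hp ζ hζ
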